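/- arXiv:1302.2415 — 2 statements merged into one kernel-verified Lean document; each statement's English description precedes it below -/
import Mathlib

section
/- Let 𝒯 ⊆ ℝ^q be nonempty, closed, convex with 𝒯 ≠ ℝ^q and recession cone containing C (a solid pointed polyhedral cone with c ∈ int C, c_q = 1). Define 𝒯* = {y* ∈ ℝ^q : φ(y,y*) ≥ 0 for all y ∈ 𝒯}. Then 𝒯 = {y ∈ ℝ^q : φ(y,y*) ≥ 0 for all y* ∈ 𝒯*}. -/
open Matrix

/-- The coupling function of geometric duality. -/
def phiCoupling (q : ℕ) (c y ystar : Fin (q + 1) → ℝ) : ℝ :=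
  (∑ i : Fin q, y i.castSucc * ystar i.castSucc)
    + y (Fin.last q) * (1 - ∑ i : Fin q, c i.castSucc * ystar i.castSucc)
    - ystar (Fin.last q)

/-!
If `y₀ ∉ T`, separation gives a continuous functional `f` and a level `u` with `f y₀ < u < f y`
on `T`. As `T + C ⊆ T`, `f` is bounded below on rays in direction `C`, hence `f ≥ 0` on `C`;
since `f ≠ 0` and `c ∈ interior C`, even `f c > 0`. Normalising `f` by `f c` (recall `c_q = 1`),
the affine function `(f - u) / f c` is `φ(·, y*)` for some `y*`, which is then in `T*` while
`φ(y₀, y*) < 0`.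
-/

open Filter Topology

theorem LinearMap.nonneg_of_lt_apply_add_smul {E : Type*} [AddCommGroup E] [Module ℝ E]
    (f : E →ₗ[ℝ] ℝ) {u : ℝ} {y k : E} (h : ∀ t : ℝ, 0 ≤ t → u < f (y + t • k)) : 0 ≤ f k := by
  by_contra! hk
  have hy : u < f y := by simpa using h 0 le_rfl
  -- the ray reaches the level `u` at this time
  have hu := h ((u - f y) / f k) (div_nonneg_of_nonpos (by linarith) hk.le)
  rw [map_add, map_smul, smul_eq_mul, div_mul_cancel₀ _ hk.ne] at hu
  linarith

theorem LinearMap.pos_of_nonneg_of_mem_interior {E : Type*} [AddCommGroup E] [Module ℝ E]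
    [TopologicalSpace E] [IsTopologicalAddGroup E] [ContinuousSMul ℝ E]
    (f : E →ₗ[ℝ] ℝ) {C : Set E} (hC : ∀ x ∈ C, 0 ≤ f x) {c v : E} (hc : c ∈ interior C)
    (hv : 0 < f v) : 0 < f c := by
  have hlim : Tendsto (fun t : ℝ => c - t • v) (𝓝[>] 0) (𝓝 c) := by
    simpa using ((tendsto_const_nhds (x := c)).sub (tendsto_id.smul_const v)).mono_left
      (nhdsWithin_le_nhds (a := (0:ℝ)))
  obtain ⟨t, htC, ht⟩ := ((hlim.eventually (mem_interior_iff_mem_nhds.mp hc)).and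
    self_mem_nhdsWithin).exists
  have hft := hC _ htC
  rw [map_sub, map_smul, smul_eq_mul] at hft
  linarith [mul_pos (Set.mem_Ioi.mp ht) hv]

theorem phiCoupling_update_last {q : ℕ} {c a : Fin (q + 1) → ℝ} (hcq : c (Fin.last q) = 1)
    (ha : a ⬝ᵥ c = 1) (r : ℝ) (y : Fin (q + 1) → ℝ) :
    phiCoupling q c y (Function.update a (Fin.last q) r) = a ⬝ᵥ y - r := by
  rw [dotProduct, Fin.sum_univ_castSucc, hcq, mul_one] at ha
  simp only [phiCoupling, dotProduct, Fin.sum_univ_castSucc, Function.update_self,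
    Function.update_of_ne (Fin.castSucc_lt_last _).ne, ← ha]
  simp only [mul_comm (c _), mul_comm (y _)]
  ring

theorem exists_phiCoupling_eq_div {q : ℕ} {c : Fin (q + 1) → ℝ} (hcq : c (Fin.last q) = 1)
    (f : Module.Dual ℝ (Fin (q + 1) → ℝ)) (hfc : f c ≠ 0) (u : ℝ) :
    ∃ ystar, ∀ y, phiCoupling q c y ystar = (f y - u) / f c := by
  set a := (f c)⁻¹ • (dotProductEquiv ℝ _).symm f
  have hfa : ∀ y, f y / f c = a ⬝ᵥ y := fun y => by
    rw [smul_dotProduct, smul_eq_mul, ← dotProductEquiv_apply_apply, LinearEquiv.apply_symm_apply,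
      div_eq_inv_mul]
  refine ⟨Function.update a (Fin.last q) (u / f c), fun y => ?_⟩
  rw [phiCoupling_update_last hcq (by rw [← hfa, div_self hfc]), ← hfa, sub_div]

theorem biduality_general
    (q : ℕ)
    (C : Set (Fin (q+1) → ℝ))
    (c : Fin (q+1) → ℝ) (hc : c ∈ interior C) (hcq : c (Fin.last q) = 1)
    (T : Set (Fin (q+1) → ℝ))
    (hTne : T.Nonempty) (hTclosed : IsClosed T) (hTconv : Convex ℝ T)
    (hCrec : ∀ k ∈ C, ∀ y ∈ T, ∀ t : ℝ, 0 ≤ t → y + t • k ∈ T)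
    (Tstar : Set (Fin (q+1) → ℝ))
    (hTstar : Tstar = {ystar | ∀ y ∈ T, 0 ≤ phiCoupling q c y ystar}) :
    T = {y | ∀ ystar ∈ Tstar, 0 ≤ phiCoupling q c y ystar} := by
  subst hTstar
  refine Set.Subset.antisymm (fun y hy _ hystar => hystar y hy) fun y₀ hy₀ => ?_
  by_contra hy₀T
  obtain ⟨f, u, hfy₀, hfT⟩ := geometric_hahn_banach_point_closed hTconv hTclosed hy₀T
  obtain ⟨y₁, hy₁⟩ := hTne
  have hfC : ∀ k ∈ C, 0 ≤ f k := fun k hk =>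
    f.toLinearMap.nonneg_of_lt_apply_add_smul fun t ht => hfT _ (hCrec k hk y₁ hy₁ t ht)
  have hfc : 0 < f c := f.toLinearMap.pos_of_nonneg_of_mem_interior hfC hc (v := y₁ - y₀)
    (by simpa using (hfy₀.trans (hfT y₁ hy₁)))
  obtain ⟨ystar, hφ⟩ := exists_phiCoupling_eq_div hcq f.toLinearMap hfc.ne' u
  have hystar : ∀ y ∈ T, 0 ≤ phiCoupling q c y ystar := fun y hy => by
    rw [hφ]
    exact div_nonneg (sub_nonneg.2 (hfT y hy).le) hfc.le
  have hφy₀ := hy₀ ystar hystar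
  rw [hφ] at hφy₀
  exact (div_neg_of_neg_of_pos (sub_neg.2 hfy₀) hfc).not_ge hφy₀

/-- Biduality: for a nonempty closed convex set 𝒯 ≠ ℝ^q whose recession cone contains C,
one has 𝒯 = {y : φ(y, y*) ≥ 0 for all y* ∈ 𝒯*}. -/
theorem biduality
    (q p : ℕ)
    (Y : Matrix (Fin (q+1)) (Fin p) ℝ)
    (C : Set (Fin (q+1) → ℝ))
    (hC : C = {y | ∃ lam : Fin p → ℝ, 0 ≤ lam ∧ y = Y.mulVec lam})
    (hCpointed : ∀ x ∈ C, -x ∈ C → x = 0)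
    (c : Fin (q+1) → ℝ) (hc : c ∈ interior C) (hcq : c (Fin.last q) = 1)
    (T : Set (Fin (q+1) → ℝ))
    (hTne : T.Nonempty) (hTclosed : IsClosed T) (hTconv : Convex ℝ T)
    (hTneuniv : T ≠ Set.univ)
    (hCrec : ∀ k ∈ C, ∀ y ∈ T, ∀ t : ℝ, 0 ≤ t → y + t • k ∈ T)
    (Tstar : Set (Fin (q+1) → ℝ))
    (hTstar : Tstar = {ystar | ∀ y ∈ T, 0 ≤ phiCoupling q c y ystar}) :
    T = {y | ∀ ystar ∈ Tstar, 0 ≤ phiCoupling q c y ystar} :=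
  biduality_general q C c hc hcq T hTne hTclosed hTconv hCrec Tstar hTstar
end

section
/- Whenever the linear vector optimization problem (P) with feasible set S = {x : Bx ≥ b} is feasible (S ≠ ∅), the recession cone of the upper image 𝒫 = P[S] + C equals the upper image of the homogeneous problem: 𝒫_∞ = P[S^h] + C, where S^h = {x : Bx ≥ 0}. -/
/-!
Fix `x₀ ∈ S`. If `k` is a recession direction of `𝒫`, then for every `t ≥ 0` the system
`b ≤ B x`, `0 ≤ λ`, `P x + Y λ = P x₀ + t k` is solvable. The right-hand sides of solvable systems
form a cone that is the linear image of an orthant, hence closed: if the linear map is not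
injective, a kernel vector lets one push any nonnegative preimage onto a coordinate hyperplane, so
the image is a finite union of images of smaller orthants. Scaling by `t⁻¹` and letting `t → ∞`
shows that the homogeneous right-hand side `(0, k)` is solvable as well.
-/

open Matrix Set Filter Topology Function

theorem exists_nonneg_sub_smul_apply_eq_zero {ι 𝕜 : Type*} [Fintype ι] [Field 𝕜] [LinearOrder 𝕜]
    [IsStrictOrderedRing 𝕜] {c d : ι → 𝕜} (hc : 0 ≤ c) (hd : ∃ i, 0 < d i) :
    ∃ τ : 𝕜, 0 ≤ c - τ • d ∧ ∃ i, (c - τ • d) i = 0 := by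
  classical
  obtain ⟨i₀, hi₀, hmin⟩ := (Finset.univ.filter fun i => 0 < d i).exists_min_image
    (fun i => c i / d i) (by simpa [Finset.Nonempty] using hd)
  have hd₀ : 0 < d i₀ := (Finset.mem_filter.1 hi₀).2
  refine ⟨c i₀ / d i₀, fun i => ?_, i₀, by simp [hd₀.ne']⟩
  simp only [Pi.zero_apply, Pi.sub_apply, Pi.smul_apply, smul_eq_mul, sub_nonneg]
  rcases lt_or_ge 0 (d i) with hdi | hdi
  · exact (le_div_iff₀ hdi).1 (hmin i (by simp [hdi]))
  · exact (mul_nonpos_of_nonneg_of_nonpos (div_nonneg (hc i₀) hd₀.le) hdi).trans (hc i)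

theorem LinearMap.image_Ici_eq_iUnion_of_not_injective {ι 𝕜 E : Type*} [Fintype ι] [Field 𝕜]
    [LinearOrder 𝕜] [IsStrictOrderedRing 𝕜] [AddCommGroup E] [Module 𝕜 E]
    (F : (ι → 𝕜) →ₗ[𝕜] E) (hF : ¬Injective F) : F '' Ici 0 = ⋃ i, F '' {c | 0 ≤ c ∧ c i = 0} := by
  refine (iUnion_subset fun i => image_mono fun c hc => hc.1).antisymm' ?_
  rintro _ ⟨c, hc, rfl⟩
  obtain ⟨d, hFd, hd⟩ : ∃ d, F d = 0 ∧ ∃ i, 0 < d i := by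
    obtain ⟨d, hFd, hd⟩ := not_forall₂.1 (mt (injective_iff_map_eq_zero F).2 hF)
    obtain ⟨i, hi⟩ := Function.ne_iff.1 hd
    rcases hi.lt_or_gt with h | h
    · exact ⟨-d, by simp [hFd], i, by simpa using h⟩
    · exact ⟨d, hFd, i, h⟩
  obtain ⟨τ, hτ, i, hi⟩ := exists_nonneg_sub_smul_apply_eq_zero hc hd
  exact mem_iUnion.2 ⟨i, c - τ • d, ⟨hτ, hi⟩, by simp [hFd]⟩

theorem Function.ExtendByZero.linearMap_val_image_Ici {ι 𝕜 : Type*} [Semiring 𝕜]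
    [PartialOrder 𝕜] (i : ι) :
    ExtendByZero.linearMap 𝕜 (Subtype.val : {j // j ≠ i} → ι) '' Ici 0 =
      {c | 0 ≤ c ∧ c i = 0} := by
  have hi : ¬∃ j : {j // j ≠ i}, j.1 = i := fun ⟨j, hj⟩ => j.2 hj
  ext c
  constructor
  · rintro ⟨a, ha, rfl⟩
    refine ⟨fun j => ?_, extend_apply' _ _ _ hi⟩
    by_cases hj : j = i
    · simp [hj]
    · simpa [Subtype.val_injective.extend_apply a 0 ⟨j, hj⟩] using ha ⟨j, hj⟩
  · rintro ⟨hc, hci⟩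
    refine ⟨fun j => c j, fun j => hc j, funext fun j => ?_⟩
    by_cases hj : j = i
    · simp [hj, hci]
    · exact Subtype.val_injective.extend_apply (fun j : {j // j ≠ i} => c j) 0 ⟨j, hj⟩

theorem LinearMap.isClosed_image_Ici {ι E : Type*} [Fintype ι] [AddCommGroup E] [Module ℝ E]
    [TopologicalSpace E] [IsTopologicalAddGroup E] [ContinuousSMul ℝ E] [T2Space E]
    (F : (ι → ℝ) →ₗ[ℝ] E) : IsClosed (F '' Ici 0) := by
  classical
  induction h : Fintype.card ι using Nat.strong_induction_on generalizing ι with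
  | _ n ih =>
  by_cases hF : Injective F
  · exact (F.isClosedEmbedding_of_injective (ker_eq_bot.2 hF)).isClosedMap _ isClosed_Ici
  · rw [F.image_Ici_eq_iUnion_of_not_injective hF]
    refine isClosed_iUnion_of_finite fun i => ?_
    rw [← ExtendByZero.linearMap_val_image_Ici, ← image_comp]
    exact ih _ (h ▸ Fintype.card_subtype_lt (p := (· ≠ i)) (not_not.2 rfl))
      (F ∘ₗ ExtendByZero.linearMap ℝ Subtype.val) rfl

theorem PointedCone.mem_of_forall_add_smul_mem {E : Type*} [AddCommGroup E] [Module ℝ E]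
    [TopologicalSpace E] [ContinuousAdd E] [ContinuousSMul ℝ E] {K : PointedCone ℝ E}
    (hK : IsClosed (K : Set E)) {x v : E} (h : ∀ t : ℝ, 0 ≤ t → x + t • v ∈ K) : v ∈ K := by
  have hlim : Tendsto (fun t : ℝ => t⁻¹ • x + v) atTop (𝓝 v) := by
    simpa using (tendsto_inv_atTop_zero (𝕜 := ℝ) |>.smul_const x).add_const v
  refine hK.mem_of_tendsto hlim ((eventually_gt_atTop 0).mono fun t ht => ?_)
  have := K.smul_mem (inv_nonneg.2 ht.le) (h t ht.le)
  rwa [smul_add, smul_smul, inv_mul_cancel₀ ht.ne', one_smul] at this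

def recessionCone {E : Type*} [AddCommGroup E] [Module ℝ E] (s : Set E) : Set E :=
  {v | ∀ x ∈ s, ∀ t : ℝ, 0 ≤ t → x + t • v ∈ s}

namespace Matrix

variable {I J K : Type*} [Fintype J]

/-- The pairs `(c, e)` for which the system `c ≤ A z`, `L z = e` is solvable: the image of the
orthant under `(z⁺, z⁻, s) ↦ (A (z⁺ - z⁻) - s, L (z⁺ - z⁻))`. -/
noncomputable def feasibilityCone (A : Matrix I J ℝ) (L : Matrix K J ℝ) :
    PointedCone ℝ ((I → ℝ) × (K → ℝ)) :=
  let z : ((J ⊕ J) ⊕ I → ℝ) →ₗ[ℝ] J → ℝ :=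
    LinearMap.funLeft ℝ ℝ (Sum.inl ∘ Sum.inl) - LinearMap.funLeft ℝ ℝ (Sum.inl ∘ Sum.inr)
  (PointedCone.positive ℝ _).map
    ((A.mulVecLin ∘ₗ z - LinearMap.funLeft ℝ ℝ Sum.inr).prod (L.mulVecLin ∘ₗ z))

theorem mem_feasibilityCone {A : Matrix I J ℝ} {L : Matrix K J ℝ} {p : (I → ℝ) × (K → ℝ)} :
    p ∈ feasibilityCone A L ↔ ∃ z, p.1 ≤ A *ᵥ z ∧ L *ᵥ z = p.2 := by
  simp only [feasibilityCone, PointedCone.mem_map, PointedCone.mem_positive]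
  constructor
  · rintro ⟨v, hv, rfl⟩
    exact ⟨_, sub_le_self _ fun i => hv (Sum.inr i), rfl⟩
  · rintro ⟨z, hz, hLz⟩
    refine ⟨Sum.elim (Sum.elim z⁺ z⁻) (A *ᵥ z - p.1), ?_, ?_⟩
    · simp [← Sum.elim_zero_zero, posPart_nonneg, negPart_nonneg, hz]
    · change (A *ᵥ (z⁺ - z⁻) - (A *ᵥ z - p.1), L *ᵥ (z⁺ - z⁻)) = p
      rw [posPart_sub_negPart, sub_sub_cancel, hLz]

theorem isClosed_feasibilityCone [Fintype I] (A : Matrix I J ℝ) (L : Matrix K J ℝ) :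
    IsClosed (feasibilityCone A L : Set ((I → ℝ) × (K → ℝ))) := by
  rw [feasibilityCone, PointedCone.coe_map]
  exact LinearMap.isClosed_image_Ici _

theorem recessionCone_image_mulVec [Fintype I] (A : Matrix I J ℝ) (c : I → ℝ) (L : Matrix K J ℝ)
    (hne : {z | c ≤ A *ᵥ z}.Nonempty) :
    recessionCone (L.mulVec '' {z | c ≤ A *ᵥ z}) = L.mulVec '' {z | 0 ≤ A *ᵥ z} := by
  ext k
  constructor
  · intro hk
    obtain ⟨z₀, hz₀⟩ := hne
    have hray : ∀ t : ℝ, 0 ≤ t → (c, L *ᵥ z₀) + t • (0, k) ∈ feasibilityCone A L := by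
      intro t ht
      obtain ⟨z, hz, hLz⟩ := hk _ ⟨z₀, hz₀, rfl⟩ t ht
      exact mem_feasibilityCone.2 ⟨z, by simpa using hz, by simpa using hLz⟩
    exact mem_feasibilityCone.1
      (PointedCone.mem_of_forall_add_smul_mem (isClosed_feasibilityCone A L) hray)
  · rintro ⟨z, hz, rfl⟩ _ ⟨z', hz', rfl⟩ t ht
    refine ⟨z' + t • z, ?_, by rw [mulVec_add, mulVec_smul]⟩
    show c ≤ A *ᵥ (z' + t • z)
    rw [mulVec_add, mulVec_smul]
    exact le_add_of_le_of_nonneg hz' (smul_nonneg ht hz)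

end Matrix

/-- The upper image `P[S] + C` of the problem with feasible set `S = {x | b ≤ B x}` and ordering
cone `C` generated by the columns of `Y`. -/
def upperImage {I J Q R : Type*} [Fintype J] [Fintype R] (B : Matrix I J ℝ) (b : I → ℝ)
    (P : Matrix Q J ℝ) (Y : Matrix Q R ℝ) : Set (Q → ℝ) :=
  {y | ∃ x ∈ {x | b ≤ B *ᵥ x}, ∃ k ∈ {k | ∃ lam, 0 ≤ lam ∧ k = Y *ᵥ lam}, y = P *ᵥ x + k}

theorem upperImage_eq_image_mulVec {I J Q R : Type*} [Fintype J] [Fintype R] [DecidableEq R]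
    (B : Matrix I J ℝ) (b : I → ℝ) (P : Matrix Q J ℝ) (Y : Matrix Q R ℝ) :
    upperImage B b P Y =
      (fromCols P Y).mulVec '' {z | Sum.elim b 0 ≤ fromBlocks B 0 0 (1 : Matrix R R ℝ) *ᵥ z} := by
  ext y
  simp only [upperImage, mem_ofPred_eq, mem_image, fromBlocks_mulVec, zero_mulVec, one_mulVec,
    add_zero, zero_add, Sum.elim_le_elim_iff]
  constructor
  · rintro ⟨x, hx, _, ⟨lam, hlam, rfl⟩, rfl⟩
    exact ⟨Sum.elim x lam, ⟨hx, hlam⟩, fromCols_mulVec_sumElim P Y x lam⟩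
  · rintro ⟨z, ⟨hx, hlam⟩, rfl⟩
    exact ⟨_, hx, _, ⟨_, hlam, rfl⟩, fromCols_mulVec P Y z⟩

/-- If S ≠ ∅, the recession cone of the upper image 𝒫 = P[S] + C equals the upper
image of the homogeneous problem, P[Sʰ] + C. -/
theorem recession_cone_of_upper_image
    (q n m p : ℕ)
    (B : Matrix (Fin m) (Fin n) ℝ) (b : Fin m → ℝ) (P : Matrix (Fin q) (Fin n) ℝ)
    (Y : Matrix (Fin q) (Fin p) ℝ)
    (C : Set (Fin q → ℝ))
    (hC : C = {y | ∃ lam : Fin p → ℝ, 0 ≤ lam ∧ y = Y.mulVec lam})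
    (S : Set (Fin n → ℝ)) (hS : S = {x | b ≤ B.mulVec x}) (hSne : S.Nonempty)
    (Sh : Set (Fin n → ℝ)) (hSh : Sh = {x | 0 ≤ B.mulVec x})
    (UP : Set (Fin q → ℝ))
    (hUP : UP = {y | ∃ x ∈ S, ∃ k ∈ C, y = P.mulVec x + k})
    (UPrec : Set (Fin q → ℝ))
    (hUPrec : UPrec = {k | ∀ y ∈ UP, ∀ t : ℝ, 0 ≤ t → y + t • k ∈ UP}) :
    UPrec = {y | ∃ x ∈ Sh, ∃ k ∈ C, y = P.mulVec x + k} := by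
  subst hC hS hSh hUP hUPrec
  change recessionCone (upperImage B b P Y) = upperImage B 0 P Y
  rw [upperImage_eq_image_mulVec, upperImage_eq_image_mulVec, Sum.elim_zero_zero]
  obtain ⟨x, hx⟩ := hSne
  refine recessionCone_image_mulVec _ _ _ ⟨Sum.elim x 0, ?_⟩
  simpa [fromBlocks_mulVec] using hx
end
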